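/- arXiv:2605.23329 — 5 statements merged into one kernel-verified Lean document; each statement's English description precedes it below -/
import Mathlib

section
/- Let t ∈ F_q^{n+2} be defined by t_i = v_i^{-1} u_i α_i^{n+2-k} for 1 ≤ i ≤ n, t_{n+1} = δ − h₂(α) − η·h₅(α), and t_{n+2} = −h₁(α), where α = (α₁,…,αₙ). Then C = { (c₁, …, c_{n+2}, Σ_{i=1}^{n+2} t_i c_i) : (c₁,…,c_{n+2}) ∈ C₁ }; that is, C is the extended code of the punctured code C₁ with respect to the vector t. -/
open Finset

variable {F : Type*} [Field F]

/-- The complete homogeneous symmetric polynomial `h_r(β)` of degree `r`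
evaluated at `β = (β 1, …, β m)` (with `h_0 = 1`). -/
def hsymPoly {R : Type*} [CommSemiring R] {m : ℕ} (β : Fin m → R) (r : ℕ) : R :=
  ∑ d ∈ Finset.Nat.antidiagonalTuple m r, ∏ i, β i ^ d i

/-- `u i = ∏_{j ≠ i} (α i - α j)⁻¹`. -/
def uCoef {n : ℕ} (α : Fin n → F) (i : Fin n) : F :=
  ∏ j ∈ Finset.univ.erase i, (α i - α j)⁻¹

/-- The `i`-th coefficient of a tuple indexed by `Fin k`, with default value `0`. -/
def coeffOf {k : ℕ} (fc : Fin k → F) (i : ℕ) : F :=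
  if h : i < k then fc ⟨i, h⟩ else 0

/-- Evaluation at `x` of the twisted polynomial
`f(x) = ∑_{i=0}^{k-1} f_i x^i + η f_{k-1} x^{k+2}`. -/
def twEval {k : ℕ} (η : F) (fc : Fin k → F) (x : F) : F :=
  (∑ i : Fin k, fc i * x ^ (i : ℕ)) + η * coeffOf fc (k - 1) * x ^ (k + 2)

/-- The codeword of the extended twisted generalized Reed–Solomon code `C` of length `n+3`
associated to the coefficient tuple `fc`:
`(v₁ f(α₁), …, vₙ f(αₙ), f_{k-1}, f_{k-2}, f_{k-3} + δ f_{k-1})`. -/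
def Cword (n k : ℕ) (α v : Fin n → F) (η δ : F) (fc : Fin k → F) : Fin (n + 3) → F :=
  fun j =>
    if h : (j : ℕ) < n then v ⟨(j : ℕ), h⟩ * twEval η fc (α ⟨(j : ℕ), h⟩)
    else if (j : ℕ) = n then coeffOf fc (k - 1)
    else if (j : ℕ) = n + 1 then coeffOf fc (k - 2)
    else coeffOf fc (k - 3) + δ * coeffOf fc (k - 1)

/-- The extended twisted generalized Reed–Solomon code `C` of length `n+3`. -/
def Ccode (n k : ℕ) (α v : Fin n → F) (η δ : F) : Set (Fin (n + 3) → F) :=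
  Set.range (Cword n k α v η δ)

/-- The codeword of the punctured code `C₁` of length `n+2`:
`(v₁ f(α₁), …, vₙ f(αₙ), f_{k-1}, f_{k-2})`. -/
def C1word (n k : ℕ) (α v : Fin n → F) (η : F) (fc : Fin k → F) : Fin (n + 2) → F :=
  fun j =>
    if h : (j : ℕ) < n then v ⟨(j : ℕ), h⟩ * twEval η fc (α ⟨(j : ℕ), h⟩)
    else if (j : ℕ) = n then coeffOf fc (k - 1)
    else coeffOf fc (k - 2)

/-- The punctured extended twisted generalized Reed–Solomon code `C₁` of length `n+2`. -/
def C1code (n k : ℕ) (α v : Fin n → F) (η : F) : Set (Fin (n + 2) → F) :=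
  Set.range (C1word n k α v η)

/-- The extension vector `t ∈ F^{n+2}`: `t_i = v_i⁻¹ u_i α_i^{n+2-k}` for `1 ≤ i ≤ n`,
`t_{n+1} = δ - h₂(α) - η h₅(α)`, `t_{n+2} = -h₁(α)`. -/
def tvec (n k : ℕ) (α v : Fin n → F) (η δ : F) : Fin (n + 2) → F :=
  fun i =>
    if h : (i : ℕ) < n then
      (v ⟨(i : ℕ), h⟩)⁻¹ * uCoef α ⟨(i : ℕ), h⟩ * α ⟨(i : ℕ), h⟩ ^ (n + 2 - k)
    else if (i : ℕ) = n then δ - hsymPoly α 2 - η * hsymPoly α 5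
    else -hsymPoly α 1

/-! The weights `u_i` are those of the divided difference at the nodes `α`, so
`S(r) = ∑ u_i α_i ^ r` vanishes for `r < n - 1` and equals `h_{r+1-n}(α)` for `r ≥ n - 1`.
For `r < n` compare the coefficients of `X ^ (n - 1)` in `X ^ r` and in its Lagrange
interpolant; beyond that, `S` and `h` satisfy the same recurrence
`S_α(r + 1) = α₀ S_α(r) + S_{α'}(r)`, where `α'` drops the node `α₀`. Hence
`∑ u_i α_i ^ (n+2-k) f(α_i) = f_{k-3} + h₁ f_{k-2} + (h₂ + η h₅) f_{k-1}`, and the last two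
entries of `t` turn this into the last coordinate `f_{k-3} + δ f_{k-1}` of `C`. -/

section CompleteHomogeneous

variable {R : Type*} [CommSemiring R]

theorem hsymPoly_zero_right {m : ℕ} (β : Fin m → R) : hsymPoly β 0 = 1 := by
  simp [hsymPoly, Finset.Nat.antidiagonalTuple_zero_right]

theorem hsymPoly_fin_zero_succ (β : Fin 0 → R) (s : ℕ) : hsymPoly β (s + 1) = 0 := by
  simp [hsymPoly]

theorem hsymPoly_eq_sum_antidiagonal {m : ℕ} (α : Fin (m + 1) → R) (s : ℕ) :
    hsymPoly α s = ∑ p ∈ antidiagonal s, α 0 ^ p.1 * hsymPoly (Fin.tail α) p.2 := by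
  simp only [hsymPoly, Finset.sum_eq_multiset_sum, Finset.Nat.antidiagonalTuple,
    Multiset.Nat.antidiagonalTuple, Multiset.map_coe, Multiset.sum_coe,
    List.Nat.antidiagonalTuple, List.flatMap_def, List.map_flatten, List.sum_flatten, List.map_map]
  show _ = (List.map _ (List.Nat.antidiagonal s)).sum
  congr 1
  refine List.map_congr_left fun p _ => ?_
  simp only [Function.comp_def, List.map_map, Fin.prod_univ_succ, Fin.cons_zero, Fin.cons_succ,
    List.sum_map_mul_left]
  rfl

theorem hsymPoly_succ {m : ℕ} (α : Fin (m + 1) → R) (s : ℕ) :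
    hsymPoly α (s + 1) = α 0 * hsymPoly α s + hsymPoly (Fin.tail α) (s + 1) := by
  rw [hsymPoly_eq_sum_antidiagonal, hsymPoly_eq_sum_antidiagonal, Nat.sum_antidiagonal_succ,
    Finset.mul_sum]
  simp only [pow_zero, one_mul, pow_succ, mul_assoc, mul_left_comm (α 0)]
  rw [add_comm]

end CompleteHomogeneous

theorem uCoef_succ {n : ℕ} (α : Fin (n + 1) → F) (j : Fin n) :
    uCoef α j.succ = (α j.succ - α 0)⁻¹ * uCoef (Fin.tail α) j := by
  simp only [uCoef, ← Finset.filter_ne', Finset.prod_filter, Fin.prod_univ_succ]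
  simp [Fin.tail, (Fin.succ_ne_zero j).symm]

theorem sum_uCoef_mul_pow_succ {n : ℕ} (α : Fin (n + 1) → F) (hα : Function.Injective α)
    (r : ℕ) :
    ∑ i, uCoef α i * α i ^ (r + 1) =
      α 0 * ∑ i, uCoef α i * α i ^ r + ∑ j, uCoef (Fin.tail α) j * Fin.tail α j ^ r := by
  have hsplit : ∀ i, uCoef α i * α i ^ (r + 1) =
      α 0 * (uCoef α i * α i ^ r) + uCoef α i * (α i - α 0) * α i ^ r := fun i => by ring
  simp only [hsplit, Finset.sum_add_distrib, ← Finset.mul_sum]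
  congr 1
  rw [Fin.sum_univ_succ, sub_self, mul_zero, zero_mul, zero_add]
  refine Finset.sum_congr rfl fun j _ => ?_
  have hne : α j.succ - α 0 ≠ 0 := sub_ne_zero.2 fun h => Fin.succ_ne_zero j (hα h)
  rw [uCoef_succ, Fin.tail]
  field_simp

theorem uCoef_basis_coeff {n : ℕ} (α : Fin n → F) (hα : Function.Injective α) (i : Fin n) :
    (Lagrange.basis Finset.univ α i).coeff (n - 1) = uCoef α i := by
  have hdeg : (Lagrange.basis Finset.univ α i).natDegree = n - 1 := by
    rw [Lagrange.natDegree_basis hα.injOn (mem_univ i), card_univ, Fintype.card_fin]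
  rw [← hdeg, Polynomial.coeff_natDegree, Lagrange.basis, Polynomial.leadingCoeff_prod]
  refine Finset.prod_congr rfl fun j _ => ?_
  rw [Lagrange.basisDivisor, Polynomial.leadingCoeff_mul, Polynomial.leadingCoeff_C,
    (Polynomial.monic_X_sub_C (α j)).leadingCoeff, mul_one]

open Polynomial in
theorem sum_uCoef_mul_pow_of_lt {n : ℕ} (α : Fin n → F) (hα : Function.Injective α) {r : ℕ}
    (hr : r < n) :
    ∑ i, uCoef α i * α i ^ r = if r = n - 1 then 1 else 0 := by
  have hdeg : ((X : F[X]) ^ r).degree < (#(Finset.univ : Finset (Fin n)) : ℕ) := by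
    rw [Polynomial.degree_X_pow, card_univ, Fintype.card_fin]
    exact_mod_cast hr
  have h := congrArg (fun p => Polynomial.coeff p (n - 1))
    (Lagrange.eq_interpolate (f := (X : F[X]) ^ r) hα.injOn hdeg)
  simp only [Lagrange.interpolate_apply, Polynomial.finsetSum_coeff, Polynomial.coeff_C_mul,
    Polynomial.eval_pow, Polynomial.eval_X, Polynomial.coeff_X_pow, uCoef_basis_coeff α hα] at h
  simpa only [mul_comm, eq_comm] using h.symm

theorem sum_uCoef_mul_pow_add {m : ℕ} (α : Fin (m + 1) → F) (hα : Function.Injective α)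
    (s : ℕ) : ∑ i, uCoef α i * α i ^ (m + s) = hsymPoly α s := by
  induction m generalizing s with
  | zero =>
    induction s with
    | zero => simpa [hsymPoly_zero_right] using sum_uCoef_mul_pow_of_lt α hα zero_lt_one
    | succ s ih =>
      rw [← add_assoc, sum_uCoef_mul_pow_succ α hα, ih, hsymPoly_succ, hsymPoly_fin_zero_succ]
      simp
  | succ m ihm =>
    induction s with
    | zero => simpa [hsymPoly_zero_right] using sum_uCoef_mul_pow_of_lt α hα (Nat.lt_succ_self _)
    | succ s ih =>
      rw [← add_assoc, sum_uCoef_mul_pow_succ α hα, ih, hsymPoly_succ,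
        show m + 1 + s = m + (s + 1) by omega,
        ihm (Fin.tail α) (hα.comp (Fin.succ_injective _)) (s + 1)]

theorem sum_uCoef_mul_pow {n : ℕ} (α : Fin n → F) (hα : Function.Injective α) (r : ℕ) :
    ∑ i, uCoef α i * α i ^ r = if r + 1 < n then 0 else hsymPoly α (r + 1 - n) := by
  cases n with
  | zero => simp [hsymPoly_fin_zero_succ]
  | succ m =>
    split_ifs with hr
    · rw [sum_uCoef_mul_pow_of_lt α hα (by omega), if_neg (by omega)]
    · obtain ⟨s, rfl⟩ := Nat.exists_eq_add_of_le (Nat.le_of_not_lt (mt Nat.succ_lt_succ hr))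
      rw [sum_uCoef_mul_pow_add α hα]
      congr 1
      omega

theorem twEval_eq_sum_range {k : ℕ} (η : F) (fc : Fin k → F) (x : F) :
    twEval η fc x =
      ∑ j ∈ range k, coeffOf fc j * x ^ j + η * coeffOf fc (k - 1) * x ^ (k + 2) := by
  rw [twEval, ← Fin.sum_univ_eq_sum_range (fun j => coeffOf fc j * x ^ j)]
  simp only [coeffOf, Fin.is_lt, dif_pos, Fin.eta]

theorem sum_uCoef_mul_twEval {n k : ℕ} (hk3 : 3 ≤ k) (hkn : k ≤ n) (α : Fin n → F)
    (hα : Function.Injective α) (η : F) (fc : Fin k → F) :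
    ∑ i, uCoef α i * (α i ^ (n + 2 - k) * twEval η fc (α i)) =
      coeffOf fc (k - 3) + hsymPoly α 1 * coeffOf fc (k - 2) +
        (hsymPoly α 2 + η * hsymPoly α 5) * coeffOf fc (k - 1) := by
  obtain ⟨l, rfl⟩ := Nat.exists_eq_add_of_le' hk3
  obtain ⟨p, rfl⟩ := Nat.exists_eq_add_of_le hkn
  have hpow := sum_uCoef_mul_pow α hα
  simp only [twEval_eq_sum_range, show l + 3 + p + 2 - (l + 3) = p + 2 by omega,
    show l + 3 - 1 = l + 2 by omega, show l + 3 - 2 = l + 1 by omega, Nat.add_sub_cancel,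
    mul_add, Finset.mul_sum, Finset.sum_add_distrib]
  rw [Finset.sum_comm]
  have hterm : ∀ i j, uCoef α i * (α i ^ (p + 2) * (coeffOf fc j * α i ^ j)) =
      coeffOf fc j * (uCoef α i * α i ^ (p + 2 + j)) := fun i j => by ring
  have htw : ∀ i, uCoef α i * (α i ^ (p + 2) * (η * coeffOf fc (l + 2) * α i ^ (l + 3 + 2))) =
      η * coeffOf fc (l + 2) * (uCoef α i * α i ^ (p + 2 + (l + 5))) := fun i => by ring
  simp only [hterm, htw, ← Finset.mul_sum, hpow, Finset.sum_range_succ]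
  rw [Finset.sum_eq_zero fun j hj => by rw [if_pos (by simp at hj; omega), mul_zero],
    if_neg (by omega), if_neg (by omega), if_neg (by omega), if_neg (by omega),
    show p + 2 + l + 1 - (l + 3 + p) = 0 by omega,
    show p + 2 + (l + 1) + 1 - (l + 3 + p) = 1 by omega,
    show p + 2 + (l + 2) + 1 - (l + 3 + p) = 2 by omega,
    show p + 2 + (l + 5) + 1 - (l + 3 + p) = 5 by omega, hsymPoly_zero_right]
  ring

theorem sum_tvec_mul_C1word {n k : ℕ} (hk3 : 3 ≤ k) (hkn : k ≤ n) (α v : Fin n → F)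
    (hα : Function.Injective α) (hv : ∀ i, v i ≠ 0) (η δ : F) (fc : Fin k → F) :
    ∑ i, tvec n k α v η δ i * C1word n k α v η fc i =
      coeffOf fc (k - 3) + δ * coeffOf fc (k - 1) := by
  have hcode : ∀ i : Fin n,
      tvec n k α v η δ i.castSucc.castSucc * C1word n k α v η fc i.castSucc.castSucc =
        uCoef α i * (α i ^ (n + 2 - k) * twEval η fc (α i)) := by
    intro i
    have hvi := hv i
    simp only [tvec, C1word, Fin.val_castSucc, i.is_lt, dif_pos, Fin.eta]
    field_simp
  rw [Fin.sum_univ_castSucc, Fin.sum_univ_castSucc]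
  simp only [hcode, sum_uCoef_mul_twEval hk3 hkn α hα]
  simp only [tvec, C1word, Fin.val_castSucc, Fin.val_last, lt_self_iff_false, ↓reduceDIte,
    ↓reduceIte, add_lt_iff_neg_left, not_lt_zero, Nat.add_eq_left, one_ne_zero, neg_mul]
  ring

theorem snoc_C1word_eq_Cword {n k : ℕ} (α v : Fin n → F) (η δ : F) (fc : Fin k → F) :
    (Fin.snoc (C1word n k α v η fc) (coeffOf fc (k - 3) + δ * coeffOf fc (k - 1)) :
      Fin (n + 3) → F) = Cword n k α v η δ fc := by
  funext j
  induction j using Fin.lastCases with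
  | last => simp [Cword]
  | cast j =>
    rw [Fin.snoc_castSucc]
    simp only [Cword, C1word, Fin.val_castSucc]
    split_ifs <;> first | rfl | omega

theorem Ccode_eq_extended_C1code_general {F : Type*} [Field F]
    (n k : ℕ) (hk3 : 3 ≤ k) (hkn : k ≤ n)
    (α v : Fin n → F) (hα : Function.Injective α) (hv : ∀ i, v i ≠ 0)
    (η δ : F) :
    Ccode n k α v η δ =
      (fun c : Fin (n + 2) → F =>
        (Fin.snoc c (∑ i : Fin (n + 2), tvec n k α v η δ i * c i) : Fin (n + 3) → F)) ''
        C1code n k α v η := by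
  rw [Ccode, C1code, ← Set.range_comp]
  congr 1
  funext fc
  rw [Function.comp_apply, sum_tvec_mul_C1word hk3 hkn α v hα hv, snoc_C1word_eq_Cword]

/-- `C` is the extended code of the punctured code `C₁` with respect to the vector `t`:
`C = { (c₁, …, c_{n+2}, ∑ᵢ tᵢ cᵢ) : c ∈ C₁ }`. -/
theorem Ccode_eq_extended_C1code {F : Type*} [Field F] [Fintype F]
    (n k : ℕ) (hk3 : 3 ≤ k) (hkn : k ≤ n) (hnq : n ≤ Fintype.card F)
    (α v : Fin n → F) (hα : Function.Injective α) (hv : ∀ i, v i ≠ 0)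
    (η δ : F) (hη : η ≠ 0) :
    Ccode n k α v η δ =
      (fun c : Fin (n + 2) → F =>
        (Fin.snoc c (∑ i : Fin (n + 2), tvec n k α v η δ i * c i) : Fin (n + 3) → F)) ''
        C1code n k α v η :=
  Ccode_eq_extended_C1code_general n k hk3 hkn α v hα hv η δ
end

section
/- If 3 ≤ k ≤ n − 4, then the code C is of non-GRS type: C is not monomially equivalent to any generalized Reed–Solomon code GRS_k(b, w) of length n+3 and dimension k over F_q. -/
open Finset

variable {F : Type*} [Field F]

/-- The generalized Reed–Solomon code `GRS_k(b, w)` of length `N`: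
all words `(w₁ g(b₁), …, w_N g(b_N))` with `deg g < k`. -/
def GRScode (N k : ℕ) (b w : Fin N → F) : Set (Fin N → F) :=
  { c | ∃ g : Polynomial F, g.degree < (k : ℕ) ∧ ∀ i, c i = w i * Polynomial.eval (b i) g }

/-- Two codes of length `N` are monomially equivalent if a permutation of coordinates
composed with multiplication by nonzero scalars maps one onto the other. -/
def MonomiallyEquivalent {N : ℕ} (D₁ D₂ : Set (Fin N → F)) : Prop :=
  ∃ (π : Equiv.Perm (Fin N)) (c : Fin N → F), (∀ i, c i ≠ 0) ∧
    (fun x : Fin N → F => fun i => c i * x (π i)) '' D₁ = D₂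

/-!
A nonzero codeword of `GRS_k(b, w)` vanishing on a set `Z` of `k - 1` coordinates is, up to a
scalar, `i ↦ w_i ∏_{j ∈ Z} (b_i - b_j)`. Hence for four such codewords whose zero sets satisfy
`Z₁ + Z₂ = Z₃ + Z₄` as multisets, the coordinatewise product `x₁ x₂` is a scalar multiple `l` of
`x₃ x₄`, a property that survives monomial equivalence (`SchurRigid`).

`C` does not have it. Let `Q_S` be the nodal polynomial of a set `S` of evaluation points and
`p = η X^(k+2) + X^(k-1)`, the twisted polynomial of `(0, …, 0, 1)`. For `|S| = k - 2` both `Q_S`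
and `Q_S (p /ₘ Q_S)` are twisted polynomials, and their codewords vanish on `S` and on the
coordinate `n`, resp. `n + 1`. Take `S = T ∪ {a}`, `S' = T ∪ {a'}` and pair the two kinds of
codewords crosswise: the product relation, read at the `n - k + 1 ≥ 5` remaining evaluation
points, gives `p /ₘ Q_S' = l (p /ₘ Q_S)`, an identity between polynomials of degree `4`. Then
`l = 1`, so `(Q_S - Q_S') (p /ₘ Q_S) = p %ₘ Q_S' - p %ₘ Q_S` has degree `< k - 2`, whereas
`Q_S - Q_S'` is a nonzero multiple of `Q_T` and the product has degree `k + 1`.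
-/

open Polynomial Lagrange

namespace Polynomial

theorem eq_C_leadingCoeff_mul_nodal {ι : Type*} {b : ι → F} {Z : Finset ι} (hb : Set.InjOn b Z)
    {g : F[X]} (hg : g ≠ 0) (hdeg : g.natDegree ≤ #Z) (hroot : ∀ i ∈ Z, g.eval (b i) = 0) :
    g = C g.leadingCoeff * nodal Z b := by
  have hnodal : nodal Z b = ((Z.val.map b).map fun a => X - C a).prod := by
    rw [nodal_eq, Finset.prod_eq_multiset_prod, Multiset.map_map]
    rfl
  have hle : Z.val.map b ≤ g.roots := by
    refine (Multiset.le_iff_subset (Z.nodup.map_on fun i hi j hj => hb hi hj)).mpr ?_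
    intro x hx
    obtain ⟨i, hi, rfl⟩ := Multiset.mem_map.mp hx
    exact (mem_roots hg).mpr (hroot i hi)
  refine eq_leadingCoeff_mul_of_monic_of_dvd_of_natDegree_le nodal_monic ?_ ?_
  · rw [hnodal]
    exact (Multiset.prod_X_sub_C_dvd_iff_le_roots hg _).mpr hle
  · rwa [natDegree_nodal]

theorem coeff_mul_divByMonic_of_natDegree_le {p Q : F[X]} (hQ : Q.Monic) {i : ℕ}
    (hi : Q.natDegree ≤ i) : (Q * (p /ₘ Q)).coeff i = p.coeff i := by
  have hrem : (p %ₘ Q).coeff i = 0 := by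
    refine coeff_eq_zero_of_degree_lt ((degree_modByMonic_lt p hQ).trans_le ?_)
    rw [degree_eq_natDegree hQ.ne_zero]
    exact_mod_cast hi
  rw [eq_sub_of_add_eq' (modByMonic_add_div p Q), coeff_sub, hrem, sub_zero]

theorem degree_divByMonic_mul_sub_lt {p Q Q' : F[X]} (hQ : Q.Monic) (hQ' : Q'.Monic)
    (hdeg : Q'.natDegree = Q.natDegree) (h : p /ₘ Q' = p /ₘ Q) :
    (p /ₘ Q * (Q - Q')).degree < Q.degree := by
  have hdiff : p /ₘ Q * (Q - Q') = p %ₘ Q' - p %ₘ Q := by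
    have e := modByMonic_add_div p Q
    have e' := modByMonic_add_div p Q'
    rw [h] at e'
    linear_combination e - e'
  rw [hdiff]
  refine (degree_sub_le _ _).trans_lt (max_lt ?_ (degree_modByMonic_lt p hQ))
  rw [degree_eq_natDegree hQ.ne_zero, ← hdeg, ← degree_eq_natDegree hQ'.ne_zero]
  exact degree_modByMonic_lt p hQ'

theorem divByMonic_ne_C_mul_divByMonic {p P : F[X]} (hP : P.Monic) {u u' : F} (hu : u ≠ u')
    (hp : P.natDegree + 2 ≤ p.natDegree) (l : F) :
    p /ₘ ((X - C u') * P) ≠ C l * (p /ₘ ((X - C u) * P)) := by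
  intro h
  set Q := (X - C u) * P
  set Q' := (X - C u') * P
  have hQ : Q.Monic := (monic_X_sub_C u).mul hP
  have hQ' : Q'.Monic := (monic_X_sub_C u').mul hP
  have hQd : Q.natDegree = P.natDegree + 1 := by
    rw [(monic_X_sub_C u).natDegree_mul hP, natDegree_X_sub_C, add_comm]
  have hQ'd : Q'.natDegree = P.natDegree + 1 := by
    rw [(monic_X_sub_C u').natDegree_mul hP, natDegree_X_sub_C, add_comm]
  have hp0 : p ≠ 0 := by rintro rfl; simp at hp
  have hQp : ∀ {q : F[X]}, q.natDegree = P.natDegree + 1 → q.degree ≤ p.degree := fun hq =>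
    (degree_le_of_natDegree_le (by omega)).trans (degree_eq_natDegree hp0).ge
  have hl : l = 1 := by
    have hlc := congrArg leadingCoeff h
    rw [leadingCoeff_divByMonic_of_monic hQ' (hQp hQ'd), leadingCoeff_mul, leadingCoeff_C,
      leadingCoeff_divByMonic_of_monic hQ (hQp hQd)] at hlc
    exact (mul_eq_right₀ (leadingCoeff_ne_zero.mpr hp0)).mp hlc.symm
  rw [hl, C_1, one_mul] at h
  have hlt := degree_divByMonic_mul_sub_lt hQ hQ' (hQ'd.trans hQd.symm) h
  have hsub : Q - Q' = C (u' - u) * P := by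
    rw [C_sub]
    ring
  have hc : u' - u ≠ 0 := sub_ne_zero.mpr hu.symm
  have hR : (p /ₘ Q).natDegree = p.natDegree - (P.natDegree + 1) := by
    rw [natDegree_divByMonic p hQ, hQd]
  have hR0 : p /ₘ Q ≠ 0 := by rintro h0; rw [h0] at hR; simp at hR; omega
  rw [hsub, degree_mul, degree_C_mul hc, degree_eq_natDegree hR0, degree_eq_natDegree hP.ne_zero,
    degree_eq_natDegree hQ.ne_zero, hR, hQd] at hlt
  norm_cast at hlt
  omega

end Polynomial

section SchurRigid

variable {ι : Type*}

def IsNonzeroVanishingOn (k : ℕ) (x : ι → F) (Z : Finset ι) : Prop :=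
  x ≠ 0 ∧ #Z + 1 = k ∧ ∀ i ∈ Z, x i = 0

def SchurRigid (k : ℕ) (D : Set (ι → F)) : Prop :=
  ∀ ⦃x₁ x₂ x₃ x₄ : ι → F⦄ ⦃Z₁ Z₂ Z₃ Z₄ : Finset ι⦄, x₁ ∈ D → x₂ ∈ D → x₃ ∈ D → x₄ ∈ D →
    IsNonzeroVanishingOn k x₁ Z₁ → IsNonzeroVanishingOn k x₂ Z₂ →
    IsNonzeroVanishingOn k x₃ Z₃ → IsNonzeroVanishingOn k x₄ Z₄ →
    Z₁.val + Z₂.val = Z₃.val + Z₄.val → ∃ l : F, x₁ * x₂ = l • (x₃ * x₄)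

end SchurRigid

theorem exists_eq_mul_prod_of_mem_GRScode {N k : ℕ} {b w : Fin N → F}
    (hb : Function.Injective b) (hw : ∀ i, w i ≠ 0) {x : Fin N → F} (hx : x ∈ GRScode N k b w)
    {Z : Finset (Fin N)} (hxZ : IsNonzeroVanishingOn k x Z) :
    ∃ t ≠ 0, ∀ i, x i = t * (w i * ∏ j ∈ Z, (b i - b j)) := by
  obtain ⟨hx0, hZ, hvan⟩ := hxZ
  obtain ⟨g, hdeg, hxg⟩ := hx
  have hg : g ≠ 0 := by
    rintro rfl
    exact hx0 (funext fun i => by simp [hxg i])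
  have hroot : ∀ j ∈ Z, g.eval (b j) = 0 := fun j hj =>
    (mul_eq_zero.mp ((hxg j).symm.trans (hvan j hj))).resolve_left (hw j)
  have hnat : g.natDegree ≤ #Z := by
    have := (natDegree_lt_iff_degree_lt hg).mpr hdeg
    omega
  have hgZ := eq_C_leadingCoeff_mul_nodal hb.injOn hg hnat hroot
  refine ⟨g.leadingCoeff, leadingCoeff_ne_zero.mpr hg, fun i => ?_⟩
  rw [hxg i, hgZ, eval_mul, eval_C, eval_nodal, leadingCoeff_mul, leadingCoeff_C,
    nodal_monic.leadingCoeff, mul_one]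
  ring

theorem schurRigid_GRScode {N k : ℕ} {b w : Fin N → F} (hb : Function.Injective b)
    (hw : ∀ i, w i ≠ 0) : SchurRigid k (GRScode N k b w) := by
  intro x₁ x₂ x₃ x₄ Z₁ Z₂ Z₃ Z₄ h₁ h₂ h₃ h₄ hZ₁ hZ₂ hZ₃ hZ₄ hZ
  obtain ⟨t₁, -, e₁⟩ := exists_eq_mul_prod_of_mem_GRScode hb hw h₁ hZ₁
  obtain ⟨t₂, -, e₂⟩ := exists_eq_mul_prod_of_mem_GRScode hb hw h₂ hZ₂
  obtain ⟨t₃, ht₃, e₃⟩ := exists_eq_mul_prod_of_mem_GRScode hb hw h₃ hZ₃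
  obtain ⟨t₄, ht₄, e₄⟩ := exists_eq_mul_prod_of_mem_GRScode hb hw h₄ hZ₄
  have hprod : ∀ i, (∏ j ∈ Z₁, (b i - b j)) * ∏ j ∈ Z₂, (b i - b j) =
      (∏ j ∈ Z₃, (b i - b j)) * ∏ j ∈ Z₄, (b i - b j) := fun i => by
    simp only [Finset.prod_eq_multiset_prod, ← Multiset.prod_add, ← Multiset.map_add, hZ]
  refine ⟨t₁ * t₂ / (t₃ * t₄), funext fun i => ?_⟩
  simp only [Pi.mul_apply, Pi.smul_apply, smul_eq_mul, e₁, e₂, e₃, e₄]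
  rw [div_mul_eq_mul_div, eq_div_iff (mul_ne_zero ht₃ ht₄)]
  linear_combination (t₁ * t₂ * t₃ * t₄ * w i ^ 2) * hprod i

theorem SchurRigid.of_monomiallyEquivalent {N k : ℕ} {D₁ D₂ : Set (Fin N → F)}
    (hD₂ : SchurRigid k D₂) (h : MonomiallyEquivalent D₁ D₂) : SchurRigid k D₁ := by
  obtain ⟨π, c, hc, himg⟩ := h
  set φ : (Fin N → F) → Fin N → F := fun x i => c i * x (π i)
  have hφD : ∀ {x}, x ∈ D₁ → φ x ∈ D₂ := fun hx => himg ▸ Set.mem_image_of_mem φ hx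
  have hφZ : ∀ {x Z}, IsNonzeroVanishingOn k x Z →
      IsNonzeroVanishingOn k (φ x) (Z.map π.symm.toEmbedding) := by
    rintro x Z ⟨hx0, hZ, hvan⟩
    refine ⟨fun h0 => hx0 (funext fun j => ?_), by rwa [Finset.card_map], fun i hi => ?_⟩
    · have := congrFun h0 (π.symm j)
      simpa [φ, hc] using this
    · obtain ⟨j, hj, rfl⟩ := Finset.mem_map.mp hi
      simp [φ, hvan j hj]
  intro x₁ x₂ x₃ x₄ Z₁ Z₂ Z₃ Z₄ h₁ h₂ h₃ h₄ hZ₁ hZ₂ hZ₃ hZ₄ hZ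
  obtain ⟨l, hl⟩ := hD₂ (hφD h₁) (hφD h₂) (hφD h₃) (hφD h₄) (hφZ hZ₁) (hφZ hZ₂) (hφZ hZ₃)
    (hφZ hZ₄) (by simp only [Finset.map_val, ← Multiset.map_add, hZ])
  refine ⟨l, funext fun j => mul_left_cancel₀ (pow_ne_zero 2 (hc (π.symm j))) ?_⟩
  have := congrFun hl (π.symm j)
  simp only [φ, Pi.mul_apply, Pi.smul_apply, smul_eq_mul, Equiv.apply_symm_apply] at this ⊢
  linear_combination this

theorem Finset.insert_val_add_insert_val {α : Type*} [DecidableEq α] {e e' : α}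
    {A B : Finset α} (heA : e ∉ A) (heB : e ∉ B) (he'A : e' ∉ A) (he'B : e' ∉ B) :
    (insert e A).val + (insert e' B).val = (insert e B).val + (insert e' A).val := by
  simp only [Finset.insert_val_of_notMem, heA, heB, he'A, he'B, not_false_eq_true,
    Multiset.cons_add, Multiset.add_cons, add_comm A.val]

theorem Fin.natAdd_notMem_map_castAddEmb {n m : ℕ} (S : Finset (Fin n)) (e : Fin m) :
    Fin.natAdd n e ∉ S.map (Fin.castAddEmb m) := by
  simp only [Finset.mem_map, Fin.castAddEmb_apply, not_exists, not_and]
  intro x _ h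
  have := congrArg Fin.val h
  simp only [Fin.val_castAdd, Fin.val_natAdd] at this
  omega

theorem Fin.exists_ne_notMem_card_eq {n m : ℕ} (h : m + 2 ≤ n) :
    ∃ (a a' : Fin n) (T : Finset (Fin n)), a ≠ a' ∧ a ∉ T ∧ a' ∉ T ∧ #T = m := by
  have hne : (⟨0, by omega⟩ : Fin n) ≠ ⟨1, by omega⟩ := by simp
  obtain ⟨T, hT, hTcard⟩ := Finset.exists_subset_card_eq
    (s := ({⟨0, by omega⟩, ⟨1, by omega⟩} : Finset (Fin n))ᶜ) (n := m)
    (by rw [Finset.card_compl, Finset.card_pair hne, Fintype.card_fin]; omega)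
  exact ⟨_, _, T, hne, fun h => by simpa using hT h, fun h => by simpa using hT h, hTcard⟩

section TwistedCode

variable {n k : ℕ} {α v : Fin n → F} {η δ : F}

/-- `G` is the twisted polynomial `f` of the coefficient tuple `(G.coeff i)_{i < k}`. -/
def IsTwisted (k : ℕ) (η : F) (G : F[X]) : Prop :=
  ∀ i, k ≤ i → G.coeff i = if i = k + 2 then η * G.coeff (k - 1) else 0

theorem IsTwisted.of_natDegree_lt {G : F[X]} (h : G.natDegree + 1 < k) : IsTwisted k η G := by
  intro i hi
  rw [coeff_eq_zero_of_natDegree_lt (by omega), coeff_eq_zero_of_natDegree_lt (by omega)]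
  simp

theorem IsTwisted.congr_coeff {G G' : F[X]} (hG : IsTwisted k η G)
    (h : ∀ i, k - 1 ≤ i → G'.coeff i = G.coeff i) : IsTwisted k η G' := by
  intro i hi
  rw [h i (by omega), h (k - 1) le_rfl]
  exact hG i hi

theorem coeffOf_coeff (G : F[X]) {i : ℕ} (hi : i < k) :
    coeffOf (fun j : Fin k => G.coeff j) i = G.coeff i := by
  simp [coeffOf, hi]

theorem twEval_coeff {G : F[X]} (hk : 0 < k) (hG : IsTwisted k η G) (x : F) :
    twEval η (fun i : Fin k => G.coeff i) x = G.eval x := by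
  have hdeg : G.natDegree < k + 3 :=
    Nat.lt_succ_of_le (natDegree_le_iff_coeff_eq_zero.mpr fun i hi => by
      rw [hG i (by omega), if_neg (by omega)])
  rw [eval_eq_sum_range' hdeg, twEval, coeffOf_coeff G (by omega),
    Fin.sum_univ_eq_sum_range (fun i => G.coeff i * x ^ i), Finset.sum_range_succ,
    Finset.sum_range_succ, Finset.sum_range_succ, hG k le_rfl, hG (k + 1) (by omega),
    hG (k + 2) (by omega)]
  simp

variable (n k α v η δ) in
noncomputable def Cword.ofPoly (G : F[X]) : Fin (n + 3) → F :=
  Cword n k α v η δ fun i : Fin k => G.coeff i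

theorem Cword.ofPoly_castAdd {G : F[X]} (hk : 0 < k) (hG : IsTwisted k η G) (i : Fin n) :
    Cword.ofPoly n k α v η δ G (Fin.castAdd 3 i) = v i * G.eval (α i) := by
  simp [Cword.ofPoly, Cword, twEval_coeff hk hG]

theorem Cword.ofPoly_natAdd_zero (G : F[X]) (hk : 0 < k) :
    Cword.ofPoly n k α v η δ G (Fin.natAdd n 0) = G.coeff (k - 1) := by
  simp [Cword.ofPoly, Cword, coeffOf_coeff G (show k - 1 < k by omega)]

theorem Cword.ofPoly_natAdd_one (G : F[X]) (hk : 0 < k) :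
    Cword.ofPoly n k α v η δ G (Fin.natAdd n 1) = G.coeff (k - 2) := by
  simp [Cword.ofPoly, Cword, coeffOf_coeff G (show k - 2 < k by omega)]

/-- The twisted polynomial of the coefficient tuple `(0, …, 0, 1)`. -/
noncomputable def twistPoly (k : ℕ) (η : F) : F[X] :=
  C η * X ^ (k + 2) + X ^ (k - 1)

theorem coeff_twistPoly (i : ℕ) :
    (twistPoly k η).coeff i = (if i = k + 2 then η else 0) + if i = k - 1 then 1 else 0 := by
  rw [twistPoly, coeff_add, coeff_C_mul_X_pow, coeff_X_pow]

theorem natDegree_twistPoly (hη : η ≠ 0) : (twistPoly k η).natDegree = k + 2 := by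
  rw [twistPoly, natDegree_add_eq_left_of_natDegree_lt] <;>
    rw [natDegree_C_mul_X_pow _ _ hη]
  rw [natDegree_X_pow]
  omega

theorem isTwisted_twistPoly (hk : 0 < k) : IsTwisted k η (twistPoly k η) := by
  intro i hi
  simp only [coeff_twistPoly, if_neg (show i ≠ k - 1 by omega),
    if_neg (show k - 1 ≠ k + 2 by omega)]
  simp

theorem isNonzeroVanishingOn_ofPoly {G : F[X]} (hk : 0 < k) (hG : IsTwisted k η G)
    {S : Finset (Fin n)} (hS : #S + 2 = k) (e : Fin 3) (hne : Cword.ofPoly n k α v η δ G ≠ 0)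
    (he : Cword.ofPoly n k α v η δ G (Fin.natAdd n e) = 0) (hroot : ∀ i ∈ S, G.eval (α i) = 0) :
    IsNonzeroVanishingOn k (Cword.ofPoly n k α v η δ G)
      (insert (Fin.natAdd n e) (S.map (Fin.castAddEmb 3))) := by
  refine ⟨hne, ?_, ?_⟩
  · rw [Finset.card_insert_of_notMem (Fin.natAdd_notMem_map_castAddEmb _ _), Finset.card_map]
    omega
  · simp only [Finset.mem_insert, Finset.mem_map, forall_eq_or_imp, forall_exists_index, and_imp]
    refine ⟨he, fun _ i hi hj => ?_⟩
    rw [← hj, Fin.castAddEmb_apply, Cword.ofPoly_castAdd hk hG, hroot i hi, mul_zero]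

theorem isTwisted_nodal {S : Finset (Fin n)} (hS : #S + 2 = k) : IsTwisted k η (nodal S α) :=
  .of_natDegree_lt (by rw [natDegree_nodal]; omega)

theorem coeff_nodal_mul_divByMonic {S : Finset (Fin n)} (hS : #S + 2 = k) {i : ℕ}
    (hi : k - 2 ≤ i) :
    (nodal S α * (twistPoly k η /ₘ nodal S α)).coeff i = (twistPoly k η).coeff i :=
  coeff_mul_divByMonic_of_natDegree_le nodal_monic (by rw [natDegree_nodal]; omega)

theorem isTwisted_nodal_mul_divByMonic {S : Finset (Fin n)} (hS : #S + 2 = k) :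
    IsTwisted k η (nodal S α * (twistPoly k η /ₘ nodal S α)) :=
  (isTwisted_twistPoly (by omega)).congr_coeff fun _ hi =>
    coeff_nodal_mul_divByMonic hS (by omega)

theorem isNonzeroVanishingOn_nodal {S : Finset (Fin n)} (hS : #S + 2 = k) :
    IsNonzeroVanishingOn k (Cword.ofPoly n k α v η δ (nodal S α))
      (insert (Fin.natAdd n 0) (S.map (Fin.castAddEmb 3))) := by
  have hdeg : (nodal S α).natDegree = k - 2 := by rw [natDegree_nodal]; omega
  refine isNonzeroVanishingOn_ofPoly (by omega) (isTwisted_nodal hS) hS 0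
    (Function.ne_iff.mpr ⟨Fin.natAdd n 1, ?_⟩) ?_ fun i hi => eval_nodal_at_node hi
  · rw [Cword.ofPoly_natAdd_one _ (by omega), ← hdeg, nodal_monic.coeff_natDegree]
    exact one_ne_zero
  · rw [Cword.ofPoly_natAdd_zero _ (by omega)]
    exact coeff_eq_zero_of_natDegree_lt (by omega)

theorem isNonzeroVanishingOn_nodal_mul_divByMonic {S : Finset (Fin n)} (hS : #S + 2 = k) :
    IsNonzeroVanishingOn k (Cword.ofPoly n k α v η δ (nodal S α * (twistPoly k η /ₘ nodal S α)))
      (insert (Fin.natAdd n 1) (S.map (Fin.castAddEmb 3))) := by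
  refine isNonzeroVanishingOn_ofPoly (by omega) (isTwisted_nodal_mul_divByMonic hS) hS 1
    (Function.ne_iff.mpr ⟨Fin.natAdd n 0, ?_⟩) ?_ fun i hi => ?_
  · rw [Cword.ofPoly_natAdd_zero _ (by omega), coeff_nodal_mul_divByMonic hS (by omega),
      coeff_twistPoly]
    simp [show k - 1 ≠ k + 2 by omega]
  · rw [Cword.ofPoly_natAdd_one _ (by omega), coeff_nodal_mul_divByMonic hS le_rfl,
      coeff_twistPoly]
    simp [show k - 2 ≠ k + 2 by omega, show k - 2 ≠ k - 1 by omega]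
  · rw [eval_mul, eval_nodal_at_node hi, zero_mul]

theorem eval_divByMonic_sub_C_mul_divByMonic_eq_zero (hα : Function.Injective α)
    (hv : ∀ i, v i ≠ 0) {S S' : Finset (Fin n)} (hS : #S + 2 = k) (hS' : #S' + 2 = k) {l : F}
    (hl : Cword.ofPoly n k α v η δ (nodal S α) *
        Cword.ofPoly n k α v η δ (nodal S' α * (twistPoly k η /ₘ nodal S' α)) =
      l • (Cword.ofPoly n k α v η δ (nodal S' α) *
        Cword.ofPoly n k α v η δ (nodal S α * (twistPoly k η /ₘ nodal S α))))
    {t : Fin n} (ht : t ∉ S) (ht' : t ∉ S') :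
    (twistPoly k η /ₘ nodal S' α - C l * (twistPoly k η /ₘ nodal S α)).eval (α t) = 0 := by
  have hnode : ∀ {S : Finset (Fin n)}, t ∉ S → (nodal S α).eval (α t) ≠ 0 :=
    fun htS => eval_nodal_not_at_node fun i hi => hα.ne fun h => htS (h ▸ hi)
  have hpt := congrFun hl (Fin.castAdd 3 t)
  simp only [Pi.mul_apply, Pi.smul_apply, smul_eq_mul, eval_mul,
    Cword.ofPoly_castAdd (by omega) (isTwisted_nodal hS),
    Cword.ofPoly_castAdd (by omega) (isTwisted_nodal hS'),
    Cword.ofPoly_castAdd (by omega) (isTwisted_nodal_mul_divByMonic hS),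
    Cword.ofPoly_castAdd (by omega) (isTwisted_nodal_mul_divByMonic hS')] at hpt
  -- both sides of `hpt` carry the factor `v t ^ 2 * Q_S (α t) * Q_S' (α t)`, nonzero for `t ∉ S ∪ S'`
  refine (mul_eq_zero.mp ?_).resolve_left
    (mul_ne_zero (mul_ne_zero (mul_ne_zero (hv t) (hv t)) (hnode ht)) (hnode ht'))
  rw [eval_sub, eval_mul, eval_C]
  linear_combination hpt

theorem not_schurRigid_Ccode (hk3 : 3 ≤ k) (hkn : k + 4 ≤ n) (hα : Function.Injective α)
    (hv : ∀ i, v i ≠ 0) (hη : η ≠ 0) : ¬ SchurRigid k (Ccode n k α v η δ) := by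
  intro hC
  obtain ⟨a, a', T, haa', haT, ha'T, hT⟩ :=
    Fin.exists_ne_notMem_card_eq (n := n) (m := k - 3) (by omega)
  have hSa : #(insert a T) + 2 = k := by rw [Finset.card_insert_of_notMem haT]; omega
  have hSb : #(insert a' T) + 2 = k := by rw [Finset.card_insert_of_notMem ha'T]; omega
  have hout := Fin.natAdd_notMem_map_castAddEmb (n := n) (m := 3)
  obtain ⟨l, hl⟩ := hC (Set.mem_range_self _) (Set.mem_range_self _) (Set.mem_range_self _)
    (Set.mem_range_self _) (isNonzeroVanishingOn_nodal hSa)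
    (isNonzeroVanishingOn_nodal_mul_divByMonic hSb) (isNonzeroVanishingOn_nodal hSb)
    (isNonzeroVanishingOn_nodal_mul_divByMonic hSa)
    (Finset.insert_val_add_insert_val (hout _ _) (hout _ _) (hout _ _) (hout _ _))
  have hR : ∀ {S : Finset (Fin n)}, #S + 2 = k → (twistPoly k η /ₘ nodal S α).natDegree = 4 :=
    fun hS => by
      rw [natDegree_divByMonic _ nodal_monic, natDegree_twistPoly hη, natDegree_nodal]
      omega
  refine divByMonic_ne_C_mul_divByMonic (p := twistPoly k η) (P := nodal T α) nodal_monic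
    (hα.ne haa') (by rw [natDegree_nodal, natDegree_twistPoly hη]; omega) l ?_
  rw [← nodal_insert_eq_nodal haT, ← nodal_insert_eq_nodal ha'T, ← sub_eq_zero]
  refine eq_zero_of_natDegree_lt_card_of_eval_eq_zero' _ ((insert a (insert a' T))ᶜ.map ⟨α, hα⟩)
    (Finset.forall_mem_map.mpr fun t ht => ?_) ?_
  · simp only [Finset.mem_compl, Finset.mem_insert, not_or] at ht
    exact eval_divByMonic_sub_C_mul_divByMonic_eq_zero hα hv hSa hSb hl
      (by simp [ht.1, ht.2.2]) (by simp [ht.2.1, ht.2.2])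
  · refine ((natDegree_sub_le _ _).trans (max_le (hR hSb).le
      ((natDegree_C_mul_le _ _).trans (hR hSa).le))).trans_lt ?_
    rw [Finset.card_map, Finset.card_compl, Fintype.card_fin,
      Finset.card_insert_of_notMem (by simp [haa', haT]), Finset.card_insert_of_notMem ha'T]
    omega

end TwistedCode

theorem Ccode_not_GRS_general {F : Type*} [Field F]
    (n k : ℕ) (hk3 : 3 ≤ k) (hkn : k + 4 ≤ n)
    (α v : Fin n → F) (hα : Function.Injective α) (hv : ∀ i, v i ≠ 0)
    (η δ : F) (hη : η ≠ 0) :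
    ¬ ∃ b w : Fin (n + 3) → F, Function.Injective b ∧ (∀ i, w i ≠ 0) ∧
        MonomiallyEquivalent (Ccode n k α v η δ) (GRScode (n + 3) k b w) := by
  rintro ⟨b, w, hb, hw, hequiv⟩
  exact not_schurRigid_Ccode hk3 hkn hα hv hη
    ((schurRigid_GRScode hb hw).of_monomiallyEquivalent hequiv)

/-- For `3 ≤ k ≤ n - 4`, the extended twisted generalized Reed–Solomon code `C` is of non-GRS
type: it is not monomially equivalent to any generalized Reed–Solomon code of length `n+3` and
dimension `k`. -/
theorem Ccode_not_GRS {F : Type*} [Field F] [Fintype F]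
    (n k : ℕ) (hk3 : 3 ≤ k) (hkn : k + 4 ≤ n) (hnq : n ≤ Fintype.card F)
    (α v : Fin n → F) (hα : Function.Injective α) (hv : ∀ i, v i ≠ 0)
    (η δ : F) (hη : η ≠ 0) :
    ¬ ∃ b w : Fin (n + 3) → F, Function.Injective b ∧ (∀ i, w i ≠ 0) ∧
        MonomiallyEquivalent (Ccode n k α v η δ) (GRScode (n + 3) k b w) :=
  Ccode_not_GRS_general n k hk3 hkn α v hα hv η δ hη
end

section
/- Let k ≥ 3 and let β₁, …, β_{k−1} be elements of a commutative ring R. Let M be the (k−1) × (k−1) matrix whose first k−2 rows are (β_j^0)_j, (β_j^1)_j, …, (β_j^{k−3})_j and whose last row is (β_j^{k+2})_j. Then det(M) = h₄(β) · ∏_{1 ≤ i < j ≤ k−1} (β_j − β_i). -/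
open Finset

variable {F : Type*} [Field F]

/-!
Modulo the nodal polynomial `P = ∏ᵢ (X - βᵢ)` of `n + 1` nodes, `X ^ (n + r)` reduces to a
polynomial of degree at most `n` with the same values at the nodes. Hence the last row of the
generalized Vandermonde matrix is a combination of the power rows, and the determinant is the
coefficient of `X ^ n` in that remainder times the ordinary Vandermonde determinant.
Writing `X ^ (k + 1) = (X - a) * X ^ k + a * X ^ k` and reducing `(X - a) * g` modulo
`(X - a) * q` to `(X - a) * (g %ₘ q)`, this coefficient satisfies the recursion
`h_{r+1}(a, w) = h_{r+1}(w) + a * h_r(a, w)` of the complete homogeneous symmetric polynomials.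
-/

open Polynomial Lagrange Matrix

section hsymPoly

variable {R : Type*} [CommSemiring R] {n : ℕ}

theorem hsymPoly_zero (β : Fin n → R) : hsymPoly β 0 = 1 := by
  simp [hsymPoly, Finset.Nat.antidiagonalTuple_zero_right]

theorem hsymPoly_fin_one (β : Fin 1 → R) (r : ℕ) : hsymPoly β r = β 0 ^ r := by
  simp [hsymPoly]

theorem hsymPoly_cons (a : R) (w : Fin n → R) (r : ℕ) :
    hsymPoly (Fin.cons a w) r = ∑ p ∈ antidiagonal r, a ^ p.1 * hsymPoly w p.2 := by
  -- `antidiagonalTuple (m + 1) r` is defined on lists by consing onto `antidiagonalTuple m`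
  simp only [hsymPoly, Finset.Nat.antidiagonalTuple, Multiset.Nat.antidiagonalTuple,
    List.Nat.antidiagonalTuple, Finset.sum_mk, HasAntidiagonal.antidiagonal,
    Multiset.Nat.antidiagonal]
  simp [Fin.prod_univ_succ, List.flatMap_def, List.sum_flatten, List.sum_map_mul_left,
    Function.comp_def]

theorem hsymPoly_cons_succ (a : R) (w : Fin n → R) (r : ℕ) :
    hsymPoly (Fin.cons a w) (r + 1) = hsymPoly w (r + 1) + a * hsymPoly (Fin.cons a w) r := by
  simp only [hsymPoly_cons, Nat.sum_antidiagonal_succ, mul_sum, pow_succ']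
  simp [mul_assoc]

end hsymPoly

section CommRing

variable {R : Type*} [CommRing R] {n : ℕ}

theorem nodal_univ_cons (a : R) (w : Fin n → R) :
    nodal univ (Fin.cons a w : Fin (n + 1) → R) = (X - C a) * nodal univ w := by
  simp [nodal_eq, Fin.prod_univ_succ]

theorem X_sub_C_mul_modByMonic_X_sub_C_mul {q : R[X]} (hq : q.Monic) (a : R) (g : R[X]) :
    (X - C a) * g %ₘ ((X - C a) * q) = (X - C a) * (g %ₘ q) := by
  nontriviality R
  refine (div_modByMonic_unique (g /ₘ q) _ ((monic_X_sub_C a).mul hq) ⟨?_, ?_⟩).2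
  · conv_rhs => rw [← modByMonic_add_div g q]
    ring
  · rw [(monic_X_sub_C a).degree_mul_comm, (monic_X_sub_C a).degree_mul_comm,
      (monic_X_sub_C a).degree_mul, (monic_X_sub_C a).degree_mul]
    exact WithBot.add_lt_add_right (by simp) (degree_modByMonic_lt g hq)

theorem natDegree_modByMonic_nodal_lt [Nontrivial R] (β : Fin (n + 1) → R) (f : R[X]) :
    (f %ₘ nodal univ β).natDegree < n + 1 := by
  have h_deg : (nodal univ β).natDegree = n + 1 := by
    rw [natDegree_nodal, card_univ, Fintype.card_fin]
  have h_ne : nodal univ β ≠ 1 := fun h => by simp [h] at h_deg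
  exact (natDegree_modByMonic_lt f nodal_monic h_ne).trans_eq h_deg

theorem coeff_X_pow_add_modByMonic_nodal (β : Fin (n + 1) → R) (r : ℕ) :
    (X ^ (n + r) %ₘ nodal univ β).coeff n = hsymPoly β r := by
  nontriviality R
  induction n generalizing r with
  | zero =>
    simp only [zero_add, Nat.reduceAdd, nodal_eq, univ_unique, Fin.default_eq_zero, prod_singleton,
      modByMonic_X_sub_C_eq_C_eval, coeff_C_zero, eval_pow, eval_X, hsymPoly_fin_one]
  | succ n ih =>
    rw [← Fin.cons_self_tail β]
    set a := β 0
    set w := Fin.tail β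
    induction r with
    | zero =>
      rw [add_zero, hsymPoly_zero, (modByMonic_eq_self_iff nodal_monic).2, coeff_X_pow_self]
      rw [degree_nodal, degree_X_pow, card_univ, Fintype.card_fin]
      exact_mod_cast n.succ.lt_succ_self
    | succ r ihr =>
      have h_rem : X ^ (n + 1 + (r + 1)) %ₘ nodal univ (Fin.cons a w) =
          (X - C a) * (X ^ (n + 1 + r) %ₘ nodal univ w) +
            a • (X ^ (n + 1 + r) %ₘ nodal univ (Fin.cons a w)) := by
        rw [show (X : R[X]) ^ (n + 1 + (r + 1)) =
              (X - C a) * X ^ (n + 1 + r) + a • X ^ (n + 1 + r) by rw [smul_eq_C_mul]; ring,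
          add_modByMonic, smul_modByMonic, nodal_univ_cons,
          X_sub_C_mul_modByMonic_X_sub_C_mul nodal_monic]
      have h_top : (X ^ (n + 1 + r) %ₘ nodal univ w).coeff (n + 1) = 0 :=
        coeff_eq_zero_of_natDegree_lt (natDegree_modByMonic_nodal_lt w _)
      rw [h_rem, coeff_add, coeff_smul, coeff_X_sub_C_mul, h_top, ihr,
        show n + 1 + r = n + (r + 1) by omega, ih, hsymPoly_cons_succ, mul_zero, sub_zero,
        smul_eq_mul]

theorem det_eval_matrixOfPolynomials_eq_prod_coeff_mul_det_vandermonde (v : Fin n → R)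
    (p : Fin n → R[X]) (h_deg : ∀ i, (p i).natDegree ≤ i) :
    (Matrix.of fun i j => (p j).eval (v i)).det = (∏ i, (p i).coeff i) * (vandermonde v).det := by
  rw [eval_matrixOfPolynomials_eq_vandermonde_mul_matrixOfPolynomials v p h_deg, det_mul,
    mul_comm, det_of_isUpperTriangular (M := Matrix.of fun i j => (p j).coeff i)
      fun i j hji => coeff_eq_zero_of_natDegree_lt ((h_deg j).trans_lt hji)]
  simp

theorem det_updateCol_last_vandermonde_eval (β : Fin (n + 1) → R) (f : R[X]) :
    ((vandermonde β).updateCol (Fin.last n) fun i => f.eval (β i)).det =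
      (f %ₘ nodal univ β).coeff n * (vandermonde β).det := by
  nontriviality R
  let p : Fin (n + 1) → R[X] := Fin.lastCases (f %ₘ nodal univ β) fun j => X ^ (j : ℕ)
  have hp : (vandermonde β).updateCol (Fin.last n) (fun i => f.eval (β i)) =
      Matrix.of fun i j => (p j).eval (β i) := by
    ext i j
    induction j using Fin.lastCases with
    | last =>
      simp only [p, updateCol_self, of_apply, Fin.lastCases_last]
      exact (eval₂_modByMonic_eq_self_of_root (f := RingHom.id R) (p := f)
        (eval_nodal_at_node (s := univ) (v := β) (mem_univ i))).symm
    | cast j => simp [p, vandermonde_apply]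
  have h_deg : ∀ j, (p j).natDegree ≤ j := by
    intro j
    induction j using Fin.lastCases with
    | last => simpa [p, Nat.lt_succ_iff] using natDegree_modByMonic_nodal_lt β f
    | cast j => simp [p]
  rw [hp, det_eval_matrixOfPolynomials_eq_prod_coeff_mul_det_vandermonde β p h_deg,
    Fin.prod_univ_castSucc]
  simp [p]

theorem det_updateCol_last_vandermonde_pow (β : Fin (n + 1) → R) (r : ℕ) :
    ((vandermonde β).updateCol (Fin.last n) fun i => β i ^ (n + r)).det =
      hsymPoly β r * (vandermonde β).det := by
  simpa [coeff_X_pow_add_modByMonic_nodal]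
    using det_updateCol_last_vandermonde_eval β (X ^ (n + r))

end CommRing

/-- Generalized Vandermonde determinant: the `(k-1) × (k-1)` matrix whose first `k-2` rows are
the power rows `β_j^0, …, β_j^{k-3}` and whose last row is `β_j^{k+2}` has determinant
`h₄(β) · ∏_{i < j} (β_j - β_i)`. -/
theorem det_genVandermonde_h4 {R : Type*} [CommRing R] (k : ℕ) (hk : 3 ≤ k)
    (β : Fin (k - 1) → R) :
    Matrix.det (Matrix.of fun i j : Fin (k - 1) =>
        if (i : ℕ) < k - 2 then β j ^ (i : ℕ) else β j ^ (k + 2)) =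
      hsymPoly β 4 * ∏ i : Fin (k - 1), ∏ j ∈ Finset.Ioi i, (β j - β i) := by
  obtain ⟨n, rfl⟩ : ∃ n, k = n + 2 := ⟨k - 2, by omega⟩
  have hM : (Matrix.of fun i j : Fin (n + 2 - 1) =>
      if (i : ℕ) < n + 2 - 2 then β j ^ (i : ℕ) else β j ^ (n + 2 + 2)) =
      ((vandermonde β).updateCol (Fin.last n) fun i => β i ^ (n + 4))ᵀ := by
    ext i j
    have h_last : i = Fin.last n ↔ ¬(i : ℕ) < n := by rw [Fin.ext_iff, Fin.val_last]; omega
    rw [transpose_apply, updateCol_apply, if_congr h_last rfl rfl, ite_not]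
    rfl
  rw [hM, det_transpose, ← det_vandermonde]
  exact det_updateCol_last_vandermonde_pow β 4
end

section
/- Let k ≥ 3 and let β₁, …, β_{k−1} be elements of a commutative ring R. Let M be the (k−1) × (k−1) matrix whose first k−3 rows are (β_j^0)_j, (β_j^1)_j, …, (β_j^{k−4})_j, whose next row is (β_j^{k−2})_j, and whose last row is (β_j^{k+2})_j. Then det(M) = (h₁(β)·h₄(β) − h₅(β)) · ∏_{1 ≤ i < j ≤ k−1} (β_j − β_i). -/
open Finset

variable {F : Type*} [Field F]

/-!
Multiplying geometric series gives `∑ h_r T^r · ∏ (1 - β_i T) = 1`. Cancelling the factor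
`1 - β_j T` gives `β_j^N = ∑_{b<m} h_{N-b} [T^b] ∏_{i≠j} (1 - β_i T)`, and since
`∏_{i≠j} (1 - β_i T) = ∏_i (1 - β_i T) · ∑ (β_j T)^r`, this is `β_j^N = ∑_{s<m} c_s β_j^s`
with coefficients `c_s` independent of `j` (the remainder of `X^N` modulo `∏ (X - β_i)`). In the
determinant, the rows `β^0, …, β^{m-3}, β^{m-1}` cancel every term of this combination except
`c_{m-2} β^{m-2}`, leaving `c_{m-2}` times a Vandermonde determinant with two rows swapped, and
`c_{m-2} = h_{n+2} - h_1 h_{n+1}` for `N = m + n`.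
-/

open Polynomial

section reciprocalPoly

variable {R ι : Type*} [CommRing R] (s : Finset ι) (β : ι → R)

theorem PowerSeries.mk_pow_mul_one_sub_C_mul_X (x : R) :
    (PowerSeries.mk fun k => x ^ k) * (1 - PowerSeries.C x * PowerSeries.X) = 1 := by
  simpa [PowerSeries.rescale_mk, PowerSeries.rescale_X] using
    congrArg (PowerSeries.rescale x) (PowerSeries.mk_one_mul_one_sub_eq_one R)

-- Its coefficients are the signed elementary symmetric polynomials `(-1)^t e_t(β)`.
noncomputable def reciprocalPoly : R[X] :=
  ∏ i ∈ s, (1 - C (β i) * X)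

theorem coe_reciprocalPoly :
    (reciprocalPoly s β : PowerSeries R) =
      ∏ i ∈ s, (1 - PowerSeries.C (β i) * PowerSeries.X) := by
  rw [reciprocalPoly, ← Polynomial.coeToPowerSeries.ringHom_apply, map_prod]
  simp

theorem natDegree_reciprocalPoly_le :
    (reciprocalPoly s β).natDegree ≤ #s := by
  have h (a : R) : (1 - C a * X).natDegree ≤ 1 :=
    natDegree_sub_le_of_le natDegree_one.le (by simpa using natDegree_C_mul_X_pow_le a 1)
  calc _ ≤ ∑ i ∈ s, (1 - C (β i) * X).natDegree := natDegree_prod_le s _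
    _ ≤ #s • 1 := sum_le_card_nsmul s _ 1 fun i _ => h (β i)
    _ = #s := mul_one _

theorem coeff_zero_reciprocalPoly :
    (reciprocalPoly s β).coeff 0 = 1 := by
  simp [reciprocalPoly, coeff_zero_eq_eval_zero, eval_prod]

theorem coe_reciprocalPoly_erase [DecidableEq ι] {j : ι} (hj : j ∈ s) :
    (reciprocalPoly (s.erase j) β : PowerSeries R) =
      reciprocalPoly s β * PowerSeries.mk fun k => β j ^ k := by
  rw [coe_reciprocalPoly, coe_reciprocalPoly, ← mul_prod_erase s _ hj, mul_comm (1 - _),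
    mul_assoc, mul_comm (1 - _), PowerSeries.mk_pow_mul_one_sub_C_mul_X, mul_one]

end reciprocalPoly

section hsymPoly

variable {R : Type*} [CommRing R] {m : ℕ} (β : Fin m → R)

theorem PowerSeries.mk_hsymPoly :
    PowerSeries.mk (hsymPoly β) = ∏ i, PowerSeries.mk fun k => β i ^ k := by
  ext n
  rw [PowerSeries.coeff_mk, PowerSeries.coeff_prod, finsuppAntidiag, sum_map,
    hsymPoly, ← piAntidiag_univ_fin_eq_antidiagonalTuple, ← sum_attach]
  simp

theorem mk_hsymPoly_mul_reciprocalPoly :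
    PowerSeries.mk (hsymPoly β) * (reciprocalPoly univ β : PowerSeries R) = 1 := by
  rw [PowerSeries.mk_hsymPoly, coe_reciprocalPoly, ← prod_mul_distrib]
  simp [PowerSeries.mk_pow_mul_one_sub_C_mul_X]

theorem coeff_one_reciprocalPoly : (reciprocalPoly univ β).coeff 1 = -hsymPoly β 1 := by
  have h0 := congrArg (PowerSeries.coeff 0) (mk_hsymPoly_mul_reciprocalPoly β)
  have h1 := congrArg (PowerSeries.coeff 1) (mk_hsymPoly_mul_reciprocalPoly β)
  simp only [PowerSeries.coeff_mul, HasAntidiagonal.antidiagonal_zero, PowerSeries.coeff_mk,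
    coeff_coe, sum_singleton, coeff_zero_reciprocalPoly, mul_one, PowerSeries.coeff_one,
    reduceIte, Nat.sum_antidiagonal_succ, zero_add, one_ne_zero] at h0 h1
  linear_combination h1 - (reciprocalPoly univ β).coeff 1 * h0

theorem mk_hsymPoly_mul_reciprocalPoly_erase (j : Fin m) :
    PowerSeries.mk (hsymPoly β) * (reciprocalPoly (univ.erase j) β : PowerSeries R) =
      PowerSeries.mk fun k => β j ^ k := by
  rw [coe_reciprocalPoly_erase univ β (mem_univ j), ← mul_assoc, mk_hsymPoly_mul_reciprocalPoly,
    one_mul]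

theorem coeff_reciprocalPoly_erase (j : Fin m) (b : ℕ) :
    (reciprocalPoly (univ.erase j) β).coeff b =
      ∑ s ∈ range (b + 1), β j ^ s * (reciprocalPoly univ β).coeff (b - s) := by
  have h := congrArg (PowerSeries.coeff b) (coe_reciprocalPoly_erase univ β (mem_univ j))
  rw [mul_comm, PowerSeries.coeff_mul, Nat.sum_antidiagonal_eq_sum_range_succ fun s t =>
    PowerSeries.coeff s (PowerSeries.mk fun k => β j ^ k) * PowerSeries.coeff t _] at h
  simpa only [Polynomial.coeff_coe, PowerSeries.coeff_mk] using h

theorem pow_eq_sum_coeff_reciprocalPoly_erase_mul_hsymPoly (j : Fin m) {N : ℕ}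
    (hN : m ≤ N + 1) :
    β j ^ N =
      ∑ b ∈ range m, (reciprocalPoly (univ.erase j) β).coeff b * hsymPoly β (N - b) := by
  have h := congrArg (PowerSeries.coeff N) (mk_hsymPoly_mul_reciprocalPoly_erase β j)
  rw [mul_comm, PowerSeries.coeff_mul, Nat.sum_antidiagonal_eq_sum_range_succ
    (fun b a => PowerSeries.coeff b (reciprocalPoly (univ.erase j) β : PowerSeries R) *
      PowerSeries.coeff a _)] at h
  simp only [Polynomial.coeff_coe, PowerSeries.coeff_mk] at h
  rw [← h]
  refine (sum_subset (range_subset_range.2 hN) fun b _ hbm => ?_).symm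
  rw [coeff_eq_zero_of_natDegree_lt, zero_mul]
  have := natDegree_reciprocalPoly_le (univ.erase j) β
  simp only [card_erase_of_mem (mem_univ j), card_univ, Fintype.card_fin, mem_range] at this hbm
  have := j.pos
  omega

/-- The coefficient of `X ^ s` in the remainder of `X ^ N` modulo `∏ i, (X - β i)`. -/
noncomputable def powModCoeff (N s : ℕ) : R :=
  ∑ t ∈ range (m - s), (reciprocalPoly univ β).coeff t * hsymPoly β (N - s - t)

theorem pow_eq_sum_powModCoeff_mul_pow (j : Fin m) {N : ℕ} (hN : m ≤ N + 1) :
    β j ^ N = ∑ s ∈ range m, powModCoeff β N s * β j ^ s := by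
  rw [pow_eq_sum_coeff_reciprocalPoly_erase_mul_hsymPoly β j hN]
  simp_rw [coeff_reciprocalPoly_erase, sum_mul, powModCoeff, sum_mul]
  rw [← sum_range_diag_flip]
  refine sum_congr rfl fun b _ => sum_congr rfl fun s hs => ?_
  rw [Nat.sub_sub, Nat.add_sub_cancel' (Nat.lt_succ_iff.1 (mem_range.1 hs))]
  ring

theorem powModCoeff_sub_two (hm : 2 ≤ m) (n : ℕ) :
    powModCoeff β (m + n) (m - 2) = hsymPoly β (n + 2) - hsymPoly β 1 * hsymPoly β (n + 1) := by
  rw [powModCoeff, show m - (m - 2) = 2 by omega, sum_range_succ, sum_range_one,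
    show m + n - (m - 2) - 0 = n + 2 by omega, show m + n - (m - 2) - 1 = n + 1 by omega,
    coeff_zero_reciprocalPoly, coeff_one_reciprocalPoly]
  ring

theorem det_updateRow_pow_permute (σ : Equiv.Perm (Fin m)) (r : Fin m) (c : ℕ → R) :
    ((Matrix.of fun i j => β j ^ (σ i : ℕ)).updateRow r
        fun j => ∑ s ∈ range m, c s * β j ^ s).det =
      c (σ r) * Equiv.Perm.sign σ * ∏ i : Fin m, ∏ j ∈ Ioi i, (β j - β i) := by
  set A : Matrix (Fin m) (Fin m) R := Matrix.of fun i j => β j ^ (σ i : ℕ)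
  have hrow : (fun j => ∑ s ∈ range m, c s * β j ^ s) = ∑ i, c (σ i) • A i := by
    ext j
    rw [← Fin.sum_univ_eq_sum_range (fun s => c s * β j ^ s), ← Equiv.sum_comp σ]
    simp [A]
  have hA : A = (Matrix.vandermonde β).transpose.submatrix σ id := rfl
  rw [hrow, Matrix.det_updateRow_sum, hA, Matrix.det_permute, Matrix.det_transpose,
    Matrix.det_vandermonde, smul_eq_mul, mul_assoc]

-- The bialternant of the hook partition `(n + 1, 1)`: Jacobi–Trudi's `s_{(n+1,1)}`.
theorem det_genVandermonde_hook (hm : 2 ≤ m) (n : ℕ) :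
    (Matrix.of fun i j : Fin m =>
        if (i : ℕ) < m - 2 then β j ^ (i : ℕ)
        else if (i : ℕ) = m - 2 then β j ^ (m - 1)
        else β j ^ (m + n)).det =
      (hsymPoly β 1 * hsymPoly β (n + 1) - hsymPoly β (n + 2)) *
        ∏ i : Fin m, ∏ j ∈ Ioi i, (β j - β i) := by
  set i₀ : Fin m := ⟨m - 2, by omega⟩
  set i₁ : Fin m := ⟨m - 1, by omega⟩
  have hM : (Matrix.of fun i j : Fin m =>
        if (i : ℕ) < m - 2 then β j ^ (i : ℕ)
        else if (i : ℕ) = m - 2 then β j ^ (m - 1)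
        else β j ^ (m + n)) =
      (Matrix.of fun i j => β j ^ (Equiv.swap i₀ i₁ i : ℕ)).updateRow i₁
        fun j => ∑ s ∈ range m, powModCoeff β (m + n) s * β j ^ s := by
    ext i j
    simp only [Matrix.updateRow_apply, Matrix.of_apply, Equiv.swap_apply_def, Fin.ext_iff,
      i₀, i₁, ← pow_eq_sum_powModCoeff_mul_pow β j (by omega : m ≤ m + n + 1)]
    split_ifs <;> first | rfl | omega
  rw [hM, det_updateRow_pow_permute, Equiv.swap_apply_right, Equiv.Perm.sign_swap
    (by simp [i₀, i₁, Fin.ext_iff]; omega), powModCoeff_sub_two β hm]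
  simp

end hsymPoly

/-- Generalized Vandermonde determinant: the `(k-1) × (k-1)` matrix whose first `k-3` rows are
the power rows `β_j^0, …, β_j^{k-4}`, whose next row is `β_j^{k-2}` and whose last row is
`β_j^{k+2}` has determinant `(h₁(β)·h₄(β) - h₅(β)) · ∏_{i < j} (β_j - β_i)`. -/
theorem det_genVandermonde_h1h4_sub_h5 {R : Type*} [CommRing R] (k : ℕ) (hk : 3 ≤ k)
    (β : Fin (k - 1) → R) :
    Matrix.det (Matrix.of fun i j : Fin (k - 1) =>
        if (i : ℕ) < k - 3 then β j ^ (i : ℕ)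
        else if (i : ℕ) = k - 3 then β j ^ (k - 2)
        else β j ^ (k + 2)) =
      (hsymPoly β 1 * hsymPoly β 4 - hsymPoly β 5) *
        ∏ i : Fin (k - 1), ∏ j ∈ Finset.Ioi i, (β j - β i) := by
  rw [show k - 3 = k - 1 - 2 by omega, show k - 2 = k - 1 - 1 by omega,
    show k + 2 = k - 1 + 3 by omega]
  exact det_genVandermonde_hook β (by omega) 3
end

section
/- Suppose 3 ≤ k ≤ n − 4, and let c₁, c₂, c₃ ∈ C^⊥ be the dual codewords c₁ = (v₁^{−1}u₁α₁^{n−k−4}, …, vₙ^{−1}uₙαₙ^{n−k−4}, 0, 0, 0), c₂ = (v₁^{−1}u₁α₁^{n−k−3}, …, vₙ^{−1}uₙαₙ^{n−k−3}, −η, 0, 0), c₃ = (v₁^{−1}u₁α₁^{n−k−2}, …, vₙ^{−1}uₙαₙ^{n−k−2}, −η·(α₁ + ⋯ + αₙ), 0, 0). Then c₁ ⋆ c₃ − c₂ ⋆ c₂ = (0, …, 0, −η², 0, 0), i.e., it is the vector of F_q^{n+3} whose (n+1)-st coordinate is −η² and all other coordinates are 0. In particular, the Schur square of C^⊥ contains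 a nonzero vector of Hamming weight 1. -/
open Finset

variable {F : Type*} [Field F]

/-- The (Euclidean) dual of a code `D ⊆ F^N`. -/
def dualCode {N : ℕ} (D : Set (Fin N → F)) : Set (Fin N → F) :=
  { x | ∀ c ∈ D, ∑ i, x i * c i = 0 }

/-- `c₁ = (v₁⁻¹u₁α₁^{n-k-4}, …, vₙ⁻¹uₙαₙ^{n-k-4}, 0, 0, 0)`. -/
def dvec1 (n k : ℕ) (α v : Fin n → F) : Fin (n + 3) → F :=
  fun j =>
    if h : (j : ℕ) < n then
      (v ⟨(j : ℕ), h⟩)⁻¹ * uCoef α ⟨(j : ℕ), h⟩ * α ⟨(j : ℕ), h⟩ ^ (n - k - 4)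
    else 0

/-- `c₂ = (v₁⁻¹u₁α₁^{n-k-3}, …, vₙ⁻¹uₙαₙ^{n-k-3}, -η, 0, 0)`. -/
def dvec2 (n k : ℕ) (α v : Fin n → F) (η : F) : Fin (n + 3) → F :=
  fun j =>
    if h : (j : ℕ) < n then
      (v ⟨(j : ℕ), h⟩)⁻¹ * uCoef α ⟨(j : ℕ), h⟩ * α ⟨(j : ℕ), h⟩ ^ (n - k - 3)
    else if (j : ℕ) = n then -η
    else 0

/-- `c₃ = (v₁⁻¹u₁α₁^{n-k-2}, …, vₙ⁻¹uₙαₙ^{n-k-2}, -η(α₁ + ⋯ + αₙ), 0, 0)`. -/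
def dvec3 (n k : ℕ) (α v : Fin n → F) (η : F) : Fin (n + 3) → F :=
  fun j =>
    if h : (j : ℕ) < n then
      (v ⟨(j : ℕ), h⟩)⁻¹ * uCoef α ⟨(j : ℕ), h⟩ * α ⟨(j : ℕ), h⟩ ^ (n - k - 2)
    else if (j : ℕ) = n then -η * ∑ i, α i
    else 0

/-- The Schur square of a code: the span of all componentwise products of codewords. -/
def schurSquare {N : ℕ} (D : Set (Fin N → F)) : Submodule F (Fin N → F) :=
  Submodule.span F { z | ∃ x ∈ D, ∃ y ∈ D, z = fun i => x i * y i }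

open Polynomial

lemma basis_eq_C_mul_nodal {ι : Type*} [DecidableEq ι] (s : Finset ι) (v : ι → F) (i : ι) :
    Lagrange.basis s v i =
      C (Lagrange.nodalWeight s v i) * Lagrange.nodal (s.erase i) v := by
  rw [Lagrange.basis, Lagrange.nodalWeight, Lagrange.nodal, map_prod, ← Finset.prod_mul_distrib]
  exact Finset.prod_congr rfl fun j _ => rfl

lemma coeff_basis {ι : Type*} [DecidableEq ι] (s : Finset ι) (v : ι → F) (i : ι) (hi : i ∈ s) :
    (Lagrange.basis s v i).coeff (#s - 1) = Lagrange.nodalWeight s v i := by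
  rw [basis_eq_C_mul_nodal, coeff_C_mul, ← Finset.card_erase_of_mem hi]
  have h := Lagrange.nodal_monic (s := s.erase i) (v := v)
  have hd : (Lagrange.nodal (s.erase i) v).natDegree = #(s.erase i) := Lagrange.natDegree_nodal
  rw [← hd, h.coeff_natDegree, mul_one]

lemma sum_eval_u {n : ℕ} (hn : 0 < n) (α : Fin n → F) (hα : Function.Injective α)
    (f : F[X]) (hf : f.degree < n) :
    ∑ i, f.eval (α i) * uCoef α i = f.coeff (n - 1) := by
  have hcard : #(Finset.univ : Finset (Fin n)) = n := by simp
  have h := Lagrange.eq_interpolate (s := (Finset.univ : Finset (Fin n))) (v := α)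
    (Set.injOn_of_injective hα) (f := f) (by rwa [hcard])
  have h2 := congrArg (fun p => Polynomial.coeff p (n - 1)) h
  simp only [Lagrange.interpolate_apply, Polynomial.finset_sum_coeff, coeff_C_mul] at h2
  rw [h2]
  refine Finset.sum_congr rfl fun i _ => ?_
  congr 1
  have hb := coeff_basis (Finset.univ) α i (Finset.mem_univ i)
  rw [hcard] at hb
  exact hb.symm

lemma sum_u_pow {n : ℕ} (α : Fin n → F) (hα : Function.Injective α) (m : ℕ) (hm : m < n) :
    ∑ i, uCoef α i * α i ^ m = if m = n - 1 then 1 else 0 := by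
  have h := sum_eval_u (lt_of_le_of_lt (Nat.zero_le m) hm) α hα (X ^ m)
    (by rw [degree_X_pow]; exact_mod_cast hm)
  simp only [eval_pow, eval_X, coeff_X_pow] at h
  rw [show (if m = n-1 then (1:F) else 0) = (if n-1 = m then 1 else 0) from by simp [eq_comm], ← h]
  exact Finset.sum_congr rfl fun i _ => mul_comm _ _

lemma sum_u_pow_n {n : ℕ} (hn : 0 < n) (α : Fin n → F) (hα : Function.Injective α) :
    ∑ i, uCoef α i * α i ^ n = ∑ i, α i := by
  have hcard : #(Finset.univ : Finset (Fin n)) = n := by simp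
  set g : F[X] := Lagrange.nodal Finset.univ α with hg
  have hdg : g.degree = (n : WithBot ℕ) := by
    rw [hg, Lagrange.degree_nodal, hcard]
  have hdeg : (X ^ n - g : F[X]).degree < n := by
    have h := Polynomial.degree_sub_lt (p := (X ^ n : F[X])) (q := g)
      (by rw [degree_X_pow, hdg]) (pow_ne_zero _ X_ne_zero)
      (by rw [leadingCoeff_X_pow, (Lagrange.nodal_monic : g.Monic).leadingCoeff])
    rwa [degree_X_pow] at h
  have h := sum_eval_u hn α hα (X ^ n - g) hdeg
  have heval : ∀ i : Fin n, (X ^ n - g : F[X]).eval (α i) = α i ^ n := by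
    intro i
    rw [eval_sub, eval_pow, eval_X, hg, Lagrange.eval_nodal_at_node (Finset.mem_univ i), sub_zero]
  have hco : (X ^ n - g : F[X]).coeff (n - 1) = ∑ i, α i := by
    have hp := prod_X_sub_C_coeff_card_pred (Finset.univ : Finset (Fin n)) α
      (by rw [hcard]; exact hn)
    rw [hcard] at hp
    rw [coeff_sub, coeff_X_pow, if_neg (by omega), hg, Lagrange.nodal_eq, hp, zero_sub, neg_neg]
  rw [← hco, ← h]
  exact Finset.sum_congr rfl fun i _ => by rw [heval i, mul_comm]

lemma sum_u_twEval {n k : ℕ} (α : Fin n → F) (hα : Function.Injective α)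
    (η : F) (fc : Fin k → F) (e : ℕ) (he : e + k < n) :
    ∑ i, uCoef α i * α i ^ e * twEval η fc (α i)
      = η * coeffOf fc (k - 1) * ∑ i, uCoef α i * α i ^ (e + (k + 2)) := by
  have h1 : ∀ t : Fin k, ∑ i, uCoef α i * α i ^ (e + (t:ℕ)) = 0 := by
    intro t
    rw [sum_u_pow α hα _ (by omega), if_neg (by omega)]
  calc ∑ i, uCoef α i * α i ^ e * twEval η fc (α i)
      = ∑ i, ((∑ t : Fin k, fc t * (uCoef α i * α i ^ (e + (t:ℕ))))
          + η * coeffOf fc (k-1) * (uCoef α i * α i ^ (e + (k+2)))) := by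
        refine Finset.sum_congr rfl fun i _ => ?_
        simp only [twEval, mul_add, Finset.mul_sum]
        congr 1
        · exact Finset.sum_congr rfl fun t _ => by rw [pow_add]; ring
        · rw [pow_add]; ring
    _ = (∑ t : Fin k, fc t * ∑ i, uCoef α i * α i ^ (e + (t:ℕ)))
          + η * coeffOf fc (k-1) * ∑ i, uCoef α i * α i ^ (e + (k+2)) := by
        rw [Finset.sum_add_distrib]
        congr 1
        · rw [Finset.sum_comm]
          exact Finset.sum_congr rfl fun t _ => (Finset.mul_sum _ _ _).symm
        · rw [← Finset.mul_sum]
    _ = η * coeffOf fc (k-1) * ∑ i, uCoef α i * α i ^ (e + (k+2)) := by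
        rw [Finset.sum_eq_zero fun t _ => by rw [h1 t, mul_zero], zero_add]

lemma sum_split {M : Type*} [AddCommMonoid M] (n : ℕ) (f : Fin (n+3) → M) :
    ∑ j, f j = (∑ i : Fin n, f (Fin.castAdd 3 i))
      + (f ⟨n, by omega⟩ + f ⟨n+1, by omega⟩ + f ⟨n+2, by omega⟩) := by
  rw [Fin.sum_univ_add (f := f), Fin.sum_univ_three]
  congr 2 <;> exact congrArg f (Fin.ext (by simp))

section mem
variable {n k : ℕ} (hk3 : 3 ≤ k) (hkn : k + 4 ≤ n)
  (α v : Fin n → F) (hα : Function.Injective α) (hv : ∀ i, v i ≠ 0) (η δ : F)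

lemma cast_lt (i : Fin n) : ((Fin.castAdd 3 i : Fin (n+3)) : ℕ) < n := by
  simpa using i.isLt

lemma cast_mk (i : Fin n) : (⟨((Fin.castAdd 3 i : Fin (n+3)) : ℕ), cast_lt i⟩ : Fin n) = i :=
  Fin.ext (by simp)

include hv in
lemma head_term (e : ℕ) (fc : Fin k → F) (i : Fin n) :
    ((v i)⁻¹ * uCoef α i * α i ^ e)
      * Cword n k α v η δ fc (Fin.castAdd 3 i)
    = uCoef α i * α i ^ e * twEval η fc (α i) := by
  rw [Cword, dif_pos (cast_lt i), cast_mk]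
  calc (v i)⁻¹ * uCoef α i * α i ^ e * (v i * twEval η fc (α i))
      = (v i)⁻¹ * v i * (uCoef α i * α i ^ e * twEval η fc (α i)) := by ring
    _ = uCoef α i * α i ^ e * twEval η fc (α i) := by
        rw [inv_mul_cancel₀ (hv i), one_mul]

include hk3 hkn hα hv in
lemma dvec1_mem : dvec1 n k α v ∈ dualCode (Ccode n k α v η δ) := by
  rintro c ⟨fc, rfl⟩
  rw [sum_split]
  have hhead : ∑ i : Fin n, dvec1 n k α v (Fin.castAdd 3 i)
        * Cword n k α v η δ fc (Fin.castAdd 3 i) = 0 := by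
    calc ∑ i : Fin n, dvec1 n k α v (Fin.castAdd 3 i) * Cword n k α v η δ fc (Fin.castAdd 3 i)
        = ∑ i : Fin n, uCoef α i * α i ^ (n-k-4) * twEval η fc (α i) := by
          refine Finset.sum_congr rfl fun i _ => ?_
          have hd : dvec1 n k α v (Fin.castAdd 3 i) = (v i)⁻¹ * uCoef α i * α i ^ (n-k-4) := by
            simp [dvec1, i.isLt]
          rw [hd]
          exact head_term α v hv η δ (n-k-4) fc i
      _ = η * coeffOf fc (k-1) * ∑ i, uCoef α i * α i ^ ((n-k-4) + (k+2)) :=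
          sum_u_twEval α hα η fc _ (by omega)
      _ = 0 := by
          rw [show (n-k-4) + (k+2) = n - 2 from by omega,
            sum_u_pow α hα _ (by omega), if_neg (by omega), mul_zero]
  rw [hhead]
  norm_num [dvec1]

include hk3 hkn hα hv in
lemma dvec2_mem : dvec2 n k α v η ∈ dualCode (Ccode n k α v η δ) := by
  rintro c ⟨fc, rfl⟩
  rw [sum_split]
  have hhead : ∑ i : Fin n, dvec2 n k α v η (Fin.castAdd 3 i)
        * Cword n k α v η δ fc (Fin.castAdd 3 i) = η * coeffOf fc (k-1) := by
    calc ∑ i : Fin n, dvec2 n k α v η (Fin.castAdd 3 i) * Cword n k α v η δ fc (Fin.castAdd 3 i)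
        = ∑ i : Fin n, uCoef α i * α i ^ (n-k-3) * twEval η fc (α i) := by
          refine Finset.sum_congr rfl fun i _ => ?_
          have hd : dvec2 n k α v η (Fin.castAdd 3 i) = (v i)⁻¹ * uCoef α i * α i ^ (n-k-3) := by
            simp [dvec2, i.isLt]
          rw [hd]
          exact head_term α v hv η δ (n-k-3) fc i
      _ = η * coeffOf fc (k-1) * ∑ i, uCoef α i * α i ^ ((n-k-3) + (k+2)) :=
          sum_u_twEval α hα η fc _ (by omega)
      _ = η * coeffOf fc (k-1) := by
          rw [show (n-k-3) + (k+2) = n - 1 from by omega,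
            sum_u_pow α hα _ (by omega), if_pos rfl, mul_one]
  rw [hhead]
  norm_num [dvec2, Cword]
  try ring

include hk3 hkn hα hv in
lemma dvec3_mem : dvec3 n k α v η ∈ dualCode (Ccode n k α v η δ) := by
  rintro c ⟨fc, rfl⟩
  rw [sum_split]
  have hhead : ∑ i : Fin n, dvec3 n k α v η (Fin.castAdd 3 i)
        * Cword n k α v η δ fc (Fin.castAdd 3 i)
        = η * coeffOf fc (k-1) * ∑ i, α i := by
    calc ∑ i : Fin n, dvec3 n k α v η (Fin.castAdd 3 i) * Cword n k α v η δ fc (Fin.castAdd 3 i)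
        = ∑ i : Fin n, uCoef α i * α i ^ (n-k-2) * twEval η fc (α i) := by
          refine Finset.sum_congr rfl fun i _ => ?_
          have hd : dvec3 n k α v η (Fin.castAdd 3 i) = (v i)⁻¹ * uCoef α i * α i ^ (n-k-2) := by
            simp [dvec3, i.isLt]
          rw [hd]
          exact head_term α v hv η δ (n-k-2) fc i
      _ = η * coeffOf fc (k-1) * ∑ i, uCoef α i * α i ^ ((n-k-2) + (k+2)) :=
          sum_u_twEval α hα η fc _ (by omega)
      _ = η * coeffOf fc (k-1) * ∑ i, α i := by
          rw [show (n-k-2) + (k+2) = n from by omega, sum_u_pow_n (by omega) α hα]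
  rw [hhead]
  norm_num [dvec3, Cword]
  try ring
end mem

/-- For `3 ≤ k ≤ n - 4`, `c₁ ⋆ c₃ - c₂ ⋆ c₂` is the vector whose `(n+1)`-st coordinate is
`-η²` and all other coordinates are `0`; in particular the Schur square of `C^⊥` contains a
nonzero vector of Hamming weight `1`. -/
theorem schur_dvec_eq {F : Type*} [Field F] [Fintype F] [DecidableEq F]
    (n k : ℕ) (hk3 : 3 ≤ k) (hkn : k + 4 ≤ n) (hnq : n ≤ Fintype.card F)
    (α v : Fin n → F) (hα : Function.Injective α) (hv : ∀ i, v i ≠ 0)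
    (η δ : F) (hη : η ≠ 0) :
    (fun j => dvec1 n k α v j * dvec3 n k α v η j - dvec2 n k α v η j * dvec2 n k α v η j) =
      (fun j : Fin (n + 3) => if (j : ℕ) = n then -η ^ 2 else 0) ∧
    ∃ z ∈ schurSquare (dualCode (Ccode n k α v η δ)), z ≠ 0 ∧ hammingNorm z = 1 := by
  have part1 : (fun j => dvec1 n k α v j * dvec3 n k α v η j
        - dvec2 n k α v η j * dvec2 n k α v η j) =
      (fun j : Fin (n + 3) => if (j : ℕ) = n then -η ^ 2 else 0) := by
    funext j
    by_cases h : (j : ℕ) < n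
    · simp only [dvec1, dvec2, dvec3, dif_pos h]
      rw [if_neg (by omega)]
      have hp : α ⟨(j:ℕ),h⟩ ^ (n-k-4) * α ⟨(j:ℕ),h⟩ ^ (n-k-2)
          = α ⟨(j:ℕ),h⟩ ^ (n-k-3) * α ⟨(j:ℕ),h⟩ ^ (n-k-3) := by
        rw [← pow_add, ← pow_add]
        congr 1
        omega
      linear_combination ((v ⟨(j:ℕ),h⟩)⁻¹ * uCoef α ⟨(j:ℕ),h⟩
        * ((v ⟨(j:ℕ),h⟩)⁻¹ * uCoef α ⟨(j:ℕ),h⟩)) * hp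
    · by_cases h2 : (j:ℕ) = n
      · simp only [dvec1, dvec2, dvec3, dif_neg h, if_pos h2]
        ring
      · simp only [dvec1, dvec2, dvec3, dif_neg h, if_neg h2]
        ring
  have hη2 : (-η^2 : F) ≠ 0 := by simpa using pow_ne_zero 2 hη
  refine ⟨part1, (fun j : Fin (n + 3) => if (j : ℕ) = n then -η ^ 2 else 0), ?_, ?_, ?_⟩
  · have m13 : (fun j => dvec1 n k α v j * dvec3 n k α v η j)
        ∈ schurSquare (dualCode (Ccode n k α v η δ)) :=
      Submodule.subset_span ⟨dvec1 n k α v, dvec1_mem hk3 hkn α v hα hv η δ,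
        dvec3 n k α v η, dvec3_mem hk3 hkn α v hα hv η δ, rfl⟩
    have m22 : (fun j => dvec2 n k α v η j * dvec2 n k α v η j)
        ∈ schurSquare (dualCode (Ccode n k α v η δ)) :=
      Submodule.subset_span ⟨dvec2 n k α v η, dvec2_mem hk3 hkn α v hα hv η δ,
        dvec2 n k α v η, dvec2_mem hk3 hkn α v hα hv η δ, rfl⟩
    exact part1 ▸ Submodule.sub_mem _ m13 m22
  · intro hzero
    have := congrFun hzero (⟨n, by omega⟩ : Fin (n+3))
    simp only [Pi.zero_apply, if_pos rfl] at this
    exact hη2 this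
  · rw [hammingNorm]
    rw [Finset.card_eq_one]
    refine ⟨⟨n, by omega⟩, ?_⟩
    ext j
    simp only [Finset.mem_filter, Finset.mem_univ, true_and, Finset.mem_singleton]
    constructor
    · intro hne
      by_cases hj : (j:ℕ) = n
      · exact Fin.ext hj
      · simp [hj] at hne
    · rintro rfl
      simpa using hη2
end
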